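/- Suppose that (G,m) is a ℤ²⋊Cs-tight gain graph that has a vertex v₀ of degree 3 which is incident to a loop. Let G−v₀ be the gain graph obtained from (G,m) by deleting v₀ together with its incident edges (keeping the gains of the remaining edges). Then G−v₀ is ℤ²⋊Cs-tight. -/

import Mathlib

namespace Crystal

/-- The wallpaper group `pm = ℤ² ⋊ 𝒞ₛ`.  An element is a pair of a translation
vector `t ∈ ℤ²` and a Boolean `r` recording the `𝒞ₛ`-component
(`true` = the reflection `s` in the x-axis). -/
@[ext] structure PM : Type where
  t : ℤ × ℤ
  r : Bool

namespace PM

/-- The action of the reflection component on translation vectors. -/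
def act (σ : Bool) (z : ℤ × ℤ) : ℤ × ℤ := (z.1, if σ then -z.2 else z.2)

instance : Mul PM := ⟨fun a b => ⟨a.t + act a.r b.t, xor a.r b.r⟩⟩
instance : One PM := ⟨⟨0, false⟩⟩
instance : Inv PM := ⟨fun a => ⟨act a.r (-a.t), a.r⟩⟩

lemma mul_def (a b : PM) : a * b = ⟨a.t + act a.r b.t, xor a.r b.r⟩ := rfl
lemma one_def : (1 : PM) = ⟨0, false⟩ := rfl
lemma inv_def (a : PM) : a⁻¹ = ⟨act a.r (-a.t), a.r⟩ := rfl

instance : Group PM where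
  mul_assoc a b c := by
    obtain ⟨⟨x1, x2⟩, ra⟩ := a
    obtain ⟨⟨y1, y2⟩, rb⟩ := b
    obtain ⟨⟨z1, z2⟩, rc⟩ := c
    cases ra <;> cases rb <;> cases rc <;>
      simp [mul_def, act, Prod.ext_iff] <;> omega
  one_mul a := by
    obtain ⟨⟨x1, x2⟩, ra⟩ := a
    cases ra <;> simp [mul_def, one_def, act]
  mul_one a := by
    obtain ⟨⟨x1, x2⟩, ra⟩ := a
    cases ra <;> simp [mul_def, one_def, act]
  inv_mul_cancel a := by
    obtain ⟨⟨x1, x2⟩, ra⟩ := a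
    cases ra <;> simp [mul_def, one_def, inv_def, act, Prod.ext_iff]

/-- The affine action of `pm` on the plane: `(z,σ)·x = σ(x) + z`. -/
noncomputable def toPlane (g : PM) (x : ℝ × ℝ) : ℝ × ℝ :=
  (x.1 + (g.t.1 : ℝ), (if g.r then -x.2 else x.2) + (g.t.2 : ℝ))

end PM

/-- A multigraph: a finite vertex set, a finite edge set, and two endpoint maps
(which also fix a reference orientation of every edge, from `fst` to `snd`).
Loops and parallel edges are allowed. -/
structure Multigraph (α β : Type) where
  verts : Finset α
  edges : Finset β
  fst : β → α
  snd : β → α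
  fst_mem : ∀ e ∈ edges, fst e ∈ verts
  snd_mem : ∀ e ∈ edges, snd e ∈ verts

variable {α β : Type}

/-- `H` is a subgraph of `G`. -/
def IsSubgraph (H G : Multigraph α β) : Prop :=
  H.verts ⊆ G.verts ∧ H.edges ⊆ G.edges ∧
    ∀ e ∈ H.edges, H.fst e = G.fst e ∧ H.snd e = G.snd e

/-- `(k,l)`-sparsity. -/
def Sparse (k l : ℕ) (G : Multigraph α β) : Prop :=
  ∀ H : Multigraph α β, IsSubgraph H G → 1 ≤ H.edges.card →
    (H.edges.card : ℤ) ≤ k * H.verts.card - l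

/-- `(k,l)`-tightness. -/
def Tight (k l : ℕ) (G : Multigraph α β) : Prop :=
  Sparse k l G ∧ (G.edges.card : ℤ) = k * G.verts.card - l

/-- The degree of a vertex: the number of edge-incidences, loops counting twice. -/
def Multigraph.degree [DecidableEq α] (G : Multigraph α β) (v : α) : ℕ :=
  ∑ e ∈ G.edges, ((if G.fst e = v then 1 else 0) + (if G.snd e = v then 1 else 0))

/-- The starting vertex of a step `(e, dir)` of a walk: `dir = true` means the
edge is traversed forwards. -/
def stepHead (G : Multigraph α β) (s : β × Bool) : α := if s.2 then G.fst s.1 else G.snd s.1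

/-- The final vertex of a step of a walk. -/
def stepTail (G : Multigraph α β) (s : β × Bool) : α := if s.2 then G.snd s.1 else G.fst s.1

/-- `IsWalk G u v L` : `L` is a walk in `G` from `u` to `v`. -/
def IsWalk (G : Multigraph α β) : α → α → List (β × Bool) → Prop
  | u, v, [] => u = v
  | u, v, s :: L => s.1 ∈ G.edges ∧ stepHead G s = u ∧ IsWalk G (stepTail G s) v L

/-- The net gain of a walk. -/
def walkGain (m : β → PM) (L : List (β × Bool)) : PM :=
  (L.map fun s => if s.2 then m s.1 else (m s.1)⁻¹).prod

/-- A gain graph is balanced if every closed walk has identity net gain. -/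
def Balanced (G : Multigraph α β) (m : β → PM) : Prop :=
  ∀ u L, IsWalk G u u L → walkGain m L = 1

/-- A gain graph is purely periodic if every closed walk has net gain in the
translation subgroup `ℤ²`. -/
def PurelyPeriodic (G : Multigraph α β) (m : β → PM) : Prop :=
  ∀ u L, IsWalk G u u L → (walkGain m L).r = false

/-- A multigraph is connected if every pair of its vertices is joined by a walk. -/
def Connected (G : Multigraph α β) : Prop :=
  ∀ u ∈ G.verts, ∀ v ∈ G.verts, ∃ L, IsWalk G u v L

/-- The conditions for `m` to be a gain assignment on `G`: parallel edges with the
same orientation get distinct gains, and loops get non-identity gains. -/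
structure IsGainGraph (G : Multigraph α β) (m : β → PM) : Prop where
  parallel_ne : ∀ e ∈ G.edges, ∀ f ∈ G.edges,
    e ≠ f → G.fst e = G.fst f → G.snd e = G.snd f → m e ≠ m f
  loop_ne_one : ∀ e ∈ G.edges, G.fst e = G.snd e → m e ≠ 1

/-- `ℤ²⋊𝒞ₛ`-tightness of a gain graph. -/
def PMTight (G : Multigraph α β) (m : β → PM) : Prop :=
  Tight 2 1 G ∧
    (∀ H : Multigraph α β, IsSubgraph H G → PurelyPeriodic H m → Sparse 2 2 H) ∧
    (∀ H : Multigraph α β, IsSubgraph H G → Balanced H m → Sparse 2 3 H)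

/-- The orbit rigidity matrix of a `ℤ²⋊𝒞ₛ`-gain framework. -/
noncomputable def orbitMatrix [DecidableEq α] (G : Multigraph α β) (m : β → PM)
    (p : α → ℝ × ℝ) :
    Matrix {e : β // e ∈ G.edges} ({v : α // v ∈ G.verts} × Fin 2) ℝ :=
  fun er vc =>
    let e : β := er.1
    let i : α := G.fst e
    let j : α := G.snd e
    let w : α := vc.1.1
    let entry : ℝ × ℝ :=
      if i = j then
        (if w = i then p i + p i - PM.toPlane (m e) (p i) - PM.toPlane (m e)⁻¹ (p i) else 0)
      else if w = i then p i - PM.toPlane (m e) (p j)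
      else if w = j then p j - PM.toPlane (m e)⁻¹ (p i)
      else 0
    if vc.2 = 0 then entry.1 else entry.2

/-- A configuration is generic if its orbit rigidity matrix has the maximum
possible rank among all configurations. -/
def Generic [DecidableEq α] (G : Multigraph α β) (m : β → PM) (p : α → ℝ × ℝ) : Prop :=
  ∀ q : α → ℝ × ℝ, (orbitMatrix G m q).rank ≤ (orbitMatrix G m p).rank

/-- A gain graph is rigid if the orbit rigidity matrix of a generic configuration
has rank `2|V| - 1`. -/
def Rigid [DecidableEq α] (G : Multigraph α β) (m : β → PM) : Prop :=
  ∃ p : α → ℝ × ℝ, Generic G m p ∧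
    ((orbitMatrix G m p).rank : ℤ) = 2 * G.verts.card - 1

/-- A gain graph is independent if the rows of the orbit rigidity matrix of a
generic configuration are linearly independent. -/
def Independent [DecidableEq α] (G : Multigraph α β) (m : β → PM) : Prop :=
  ∃ p : α → ℝ × ℝ, Generic G m p ∧
    LinearIndependent ℝ (fun er => orbitMatrix G m p er)

/-- A gain graph is minimally rigid if it is rigid and independent. -/
def MinimallyRigid [DecidableEq α] (G : Multigraph α β) (m : β → PM) : Prop :=
  Rigid G m ∧ Independent G m

/-- `e` joins `u` and `v` (in one of the two orientations). -/
def Joins (G : Multigraph α β) (e : β) (u v : α) : Prop :=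
  (G.fst e = u ∧ G.snd e = v) ∨ (G.fst e = v ∧ G.snd e = u)

/-- The gain of an edge read with `v` as its initial vertex (inverting the gain
if the edge is oriented towards `v`). -/
def gainFrom [DecidableEq α] (G : Multigraph α β) (m : β → PM) (v : α) (e : β) : PM :=
  if G.fst e = v then m e else (m e)⁻¹

/-- The endpoint of an edge other than `v` (for an edge incident with `v`). -/
def otherEnd [DecidableEq α] (G : Multigraph α β) (v : α) (e : β) : α :=
  if G.fst e = v then G.snd e else G.fst e

/-- Deletion of a vertex together with all edges incident with it. -/
def Multigraph.deleteVertex [DecidableEq α] (G : Multigraph α β) (v : α) :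
    Multigraph α β where
  verts := G.verts.erase v
  edges := G.edges.filter fun e => G.fst e ≠ v ∧ G.snd e ≠ v
  fst := G.fst
  snd := G.snd
  fst_mem := fun e he => by
    rw [Finset.mem_filter] at he
    exact Finset.mem_erase.2 ⟨he.2.1, G.fst_mem e he.1⟩
  snd_mem := fun e he => by
    rw [Finset.mem_filter] at he
    exact Finset.mem_erase.2 ⟨he.2.2, G.snd_mem e he.1⟩

/-- Addition of a new edge `f` from `u` to `v`. -/
def Multigraph.addEdge [DecidableEq α] [DecidableEq β] (G : Multigraph α β)
    (f : β) (u v : α) : Multigraph α β where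
  verts := insert u (insert v G.verts)
  edges := insert f G.edges
  fst := Function.update G.fst f u
  snd := Function.update G.snd f v
  fst_mem := fun e he => by
    by_cases hef : e = f
    · subst hef; simp
    · rw [Function.update_of_ne hef]
      have heG : e ∈ G.edges := by
        rcases Finset.mem_insert.1 he with h | h
        · exact absurd h hef
        · exact h
      exact Finset.mem_insert_of_mem (Finset.mem_insert_of_mem (G.fst_mem e heG))
  snd_mem := fun e he => by
    by_cases hef : e = f
    · subst hef; simp
    · rw [Function.update_of_ne hef]
      have heG : e ∈ G.edges := by
        rcases Finset.mem_insert.1 he with h | h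
        · exact absurd h hef
        · exact h
      exact Finset.mem_insert_of_mem (Finset.mem_insert_of_mem (G.snd_mem e heG))

/-- `(G',m')` is obtained from `(G,m)` by a gained 0-extension. -/
def IsZeroExtension [DecidableEq α] [DecidableEq β] (G : Multigraph α β) (m : β → PM)
    (G' : Multigraph α β) (m' : β → PM) : Prop :=
  ∃ v₀ v₁ v₂ f₁ f₂, v₀ ∉ G.verts ∧ v₁ ∈ G.verts ∧ v₂ ∈ G.verts ∧
    f₁ ∉ G.edges ∧ f₂ ∉ G.edges ∧ f₁ ≠ f₂ ∧
    G'.verts = insert v₀ G.verts ∧ G'.edges = insert f₁ (insert f₂ G.edges) ∧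
    (∀ e ∈ G.edges, G'.fst e = G.fst e ∧ G'.snd e = G.snd e ∧ m' e = m e) ∧
    Joins G' f₁ v₀ v₁ ∧ Joins G' f₂ v₀ v₂ ∧
    IsGainGraph G' m'

/-- `(G',m')` is obtained from `(G,m)` by a gained 1-extension. -/
def IsOneExtension [DecidableEq α] [DecidableEq β] (G : Multigraph α β) (m : β → PM)
    (G' : Multigraph α β) (m' : β → PM) : Prop :=
  ∃ v₀ v₃ e f₁ f₂ f₃, v₀ ∉ G.verts ∧ v₃ ∈ G.verts ∧ e ∈ G.edges ∧
    f₁ ∉ G.edges.erase e ∧ f₂ ∉ G.edges.erase e ∧ f₃ ∉ G.edges.erase e ∧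
    f₁ ≠ f₂ ∧ f₁ ≠ f₃ ∧ f₂ ≠ f₃ ∧
    G'.verts = insert v₀ G.verts ∧
    G'.edges = insert f₁ (insert f₂ (insert f₃ (G.edges.erase e))) ∧
    (∀ e' ∈ G.edges.erase e, G'.fst e' = G.fst e' ∧ G'.snd e' = G.snd e' ∧ m' e' = m e') ∧
    Joins G' f₁ v₀ (G.fst e) ∧ Joins G' f₂ v₀ (G.snd e) ∧ Joins G' f₃ v₀ v₃ ∧
    (gainFrom G' m' v₀ f₁)⁻¹ * gainFrom G' m' v₀ f₂ = m e ∧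
    IsGainGraph G' m'

/-- `(G',m')` is obtained from `(G,m)` by a gained loop-1-extension. -/
def IsLoopOneExtension [DecidableEq α] [DecidableEq β] (G : Multigraph α β) (m : β → PM)
    (G' : Multigraph α β) (m' : β → PM) : Prop :=
  ∃ v₀ v₁ l f, v₀ ∉ G.verts ∧ v₁ ∈ G.verts ∧ l ∉ G.edges ∧ f ∉ G.edges ∧ l ≠ f ∧
    G'.verts = insert v₀ G.verts ∧ G'.edges = insert l (insert f G.edges) ∧
    (∀ e ∈ G.edges, G'.fst e = G.fst e ∧ G'.snd e = G.snd e ∧ m' e = m e) ∧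
    G'.fst l = v₀ ∧ G'.snd l = v₀ ∧ (m' l).r = true ∧
    Joins G' f v₀ v₁ ∧ IsGainGraph G' m'

/-- A `ℤ²⋊𝒞ₛ`-tight gain graph on `K₁¹`: a single vertex with a single loop whose
gain has non-trivial `𝒞ₛ`-component. -/
def IsTightK11 (G : Multigraph α β) (m : β → PM) : Prop :=
  ∃ v l, G.verts = {v} ∧ G.edges = {l} ∧ G.fst l = v ∧ G.snd l = v ∧ (m l).r = true

/-! Deleting `v₀` removes its loop and exactly one further edge, so the count
`|E| = 2|V| - 1` survives the loss of one vertex and two edges; the three sparsity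
conditions pass to subgraphs. -/

lemma IsSubgraph.trans {H K G : Multigraph α β} (hHK : IsSubgraph H K)
    (hKG : IsSubgraph K G) : IsSubgraph H G := by
  refine ⟨hHK.1.trans hKG.1, hHK.2.1.trans hKG.2.1, fun e he => ?_⟩
  obtain ⟨hfst, hsnd⟩ := hHK.2.2 e he
  obtain ⟨hfst', hsnd'⟩ := hKG.2.2 e (hHK.2.1 he)
  exact ⟨hfst.trans hfst', hsnd.trans hsnd'⟩

lemma Sparse.mono {k l : ℕ} {H G : Multigraph α β} (hHG : IsSubgraph H G)
    (hG : Sparse k l G) : Sparse k l H :=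
  fun K hKH hK => hG K (hKH.trans hHG) hK

lemma PMTight.of_isSubgraph {G H : Multigraph α β} {m : β → PM} (hG : PMTight G m)
    (hHG : IsSubgraph H G) (hcard : (H.edges.card : ℤ) = 2 * H.verts.card - 1) :
    PMTight H m :=
  ⟨⟨hG.1.1.mono hHG, hcard⟩,
    fun K hKH hK => hG.2.1 K (hKH.trans hHG) hK,
    fun K hKH hK => hG.2.2 K (hKH.trans hHG) hK⟩

namespace Multigraph

variable [DecidableEq α] (G : Multigraph α β) (v : α)

def incidentEdges : Finset β := G.edges.filter fun e => G.fst e = v ∨ G.snd e = v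

def loopsAt : Finset β := G.edges.filter fun e => G.fst e = v ∧ G.snd e = v

lemma deleteVertex_isSubgraph : IsSubgraph (G.deleteVertex v) G :=
  ⟨Finset.erase_subset _ _, Finset.filter_subset _ _, fun _ _ => ⟨rfl, rfl⟩⟩

lemma card_edges_deleteVertex_add_card_incidentEdges :
    (G.deleteVertex v).edges.card + (G.incidentEdges v).card = G.edges.card := by
  rw [add_comm, incidentEdges, ← Finset.card_filter_add_card_filter_not
    (s := G.edges) (p := fun e => G.fst e = v ∨ G.snd e = v)]
  simp only [deleteVertex, not_or]

lemma degree_eq_card_incidentEdges_add_card_loopsAt :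
    G.degree v = (G.incidentEdges v).card + (G.loopsAt v).card := by
  simp only [degree, incidentEdges, loopsAt, Finset.card_filter, ← Finset.sum_add_distrib]
  refine Finset.sum_congr rfl fun e _ => ?_
  by_cases h₁ : G.fst e = v <;> by_cases h₂ : G.snd e = v <;> simp [h₁, h₂]

lemma loopsAt_subset_incidentEdges : G.loopsAt v ⊆ G.incidentEdges v :=
  Finset.monotone_filter_right _ fun _ _ h => Or.inl h.1

variable {G v}

lemma card_incidentEdges_eq_two {l : β} (hdeg : G.degree v = 3) (hl : l ∈ G.edges)
    (hlf : G.fst l = v) (hls : G.snd l = v) : (G.incidentEdges v).card = 2 := by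
  have hloop : 1 ≤ (G.loopsAt v).card :=
    Finset.card_pos.2 ⟨l, Finset.mem_filter.2 ⟨hl, hlf, hls⟩⟩
  have hle := Finset.card_le_card (G.loopsAt_subset_incidentEdges v)
  have hsplit := G.degree_eq_card_incidentEdges_add_card_loopsAt v
  omega

end Multigraph

theorem loopOneReduction_tight_general {α β : Type} [DecidableEq α]
    (G : Multigraph α β) (m : β → PM) (hT : PMTight G m)
    (v₀ : α) (hv₀ : v₀ ∈ G.verts) (hdeg : G.degree v₀ = 3)
    (l : β) (hl : l ∈ G.edges) (hlf : G.fst l = v₀) (hls : G.snd l = v₀) :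
    PMTight (G.deleteVertex v₀) m := by
  refine hT.of_isSubgraph (G.deleteVertex_isSubgraph v₀) ?_
  have hverts : (G.deleteVertex v₀).verts.card + 1 = G.verts.card :=
    Finset.card_erase_add_one hv₀
  have hedges := G.card_edges_deleteVertex_add_card_incidentEdges v₀
  rw [Multigraph.card_incidentEdges_eq_two hdeg hl hlf hls] at hedges
  have hcount := hT.1.2
  omega

/-- A gained loop-1-reduction at a degree-3 vertex incident to a
loop of a `ℤ²⋊𝒞ₛ`-tight gain graph yields a `ℤ²⋊𝒞ₛ`-tight gain graph. -/
theorem loopOneReduction_tight {α β : Type} [DecidableEq α]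
    (G : Multigraph α β) (m : β → PM) (hGm : IsGainGraph G m) (hT : PMTight G m)
    (v₀ : α) (hv₀ : v₀ ∈ G.verts) (hdeg : G.degree v₀ = 3)
    (l : β) (hl : l ∈ G.edges) (hlf : G.fst l = v₀) (hls : G.snd l = v₀) :
    PMTight (G.deleteVertex v₀) m :=
  loopOneReduction_tight_general G m hT v₀ hv₀ hdeg l hl hlf hls

end Crystal
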